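/- The Gagliardo-Nirenberg-Sobolev inequality: for 1 ≤ p < N there is a constant C depending only on p and N such that for all compactly supported C¹ functions u : ℝ^N → ℝ, ‖u‖_{L^{p*}(ℝ^N)} ≤ C ‖∇u‖_{L^p(ℝ^N)}, where p* = pN/(N-p). -/

import Mathlib

open MeasureTheory Module

lemma inv_sobolevConjugate {p n : ℝ} (hp : 0 < p) (hpn : p < n) :
    (p * n / (n - p))⁻¹ = p⁻¹ - n⁻¹ := by
  have hn : 0 < n := hp.trans hpn
  have hnp : n - p ≠ 0 := (sub_pos.mpr hpn).ne'
  field_simp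

theorem eLpNorm_le_eLpNorm_fderiv_of_sobolevConjugate
    {E F : Type*} [NormedAddCommGroup E] [NormedSpace ℝ E] [MeasurableSpace E] [BorelSpace E]
    [FiniteDimensional ℝ E] (μ : Measure E) [μ.IsAddHaarMeasure]
    [NormedAddCommGroup F] [NormedSpace ℝ F] [FiniteDimensional ℝ F]
    {u : E → F} (hu : ContDiff ℝ 1 u) (h2u : HasCompactSupport u)
    {p : ℝ} (hp : 1 ≤ p) (hpn : p < finrank ℝ E) :
    eLpNorm u (ENNReal.ofReal (p * finrank ℝ E / (finrank ℝ E - p))) μ ≤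
      SNormLESNormFDerivOfEqConst F μ p * eLpNorm (fderiv ℝ u) (ENNReal.ofReal p) μ := by
  have hp0 : 0 < p := one_pos.trans_le hp
  have hfinrank : 0 < finrank ℝ E := by exact_mod_cast hp0.trans hpn
  have key := eLpNorm_le_eLpNorm_fderiv_of_eq μ hu h2u (p := p.toNNReal)
    (p' := (p * finrank ℝ E / (finrank ℝ E - p)).toNNReal)
    (Real.one_le_toNNReal.mpr hp) hfinrank
    (by
      rw [Real.coe_toNNReal _ (by have := sub_pos.mpr hpn; positivity),
        NNReal.coe_inv, Real.coe_toNNReal _ hp0.le]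
      exact inv_sobolevConjugate hp0 hpn)
  rwa [Real.coe_toNNReal _ hp0.le] at key

theorem gagliardo_nirenberg_sobolev_general (N : ℕ) (p : ℝ)
    (hp : 1 ≤ p) (hpN : p < N) :
    ∃ C : ℝ, 0 < C ∧ ∀ u : EuclideanSpace ℝ (Fin N) → ℝ,
      ContDiff ℝ 1 u → HasCompactSupport u →
      eLpNorm u (ENNReal.ofReal (p * N / (N - p))) volume ≤
        ENNReal.ofReal C * eLpNorm (fun x => fderiv ℝ u x) (ENNReal.ofReal p) volume := by
  set c := SNormLESNormFDerivOfEqConst ℝ (volume : Measure (EuclideanSpace ℝ (Fin N))) p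
  refine ⟨max 1 c, one_pos.trans_le (le_max_left _ _), fun u hu h2u => ?_⟩
  have hfinrank : finrank ℝ (EuclideanSpace ℝ (Fin N)) = N := finrank_euclideanSpace_fin
  have key := eLpNorm_le_eLpNorm_fderiv_of_sobolevConjugate volume hu h2u hp (by rwa [hfinrank])
  rw [hfinrank] at key
  refine key.trans (mul_le_mul_left ?_ _)
  rw [← ENNReal.ofReal_coe_nnreal]
  exact ENNReal.ofReal_le_ofReal (le_max_right _ _)

theorem gagliardo_nirenberg_sobolev (N : ℕ) (hN : 2 ≤ N) (p : ℝ)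
    (hp : 1 ≤ p) (hpN : p < N) :
    ∃ C : ℝ, 0 < C ∧ ∀ u : EuclideanSpace ℝ (Fin N) → ℝ,
      ContDiff ℝ 1 u → HasCompactSupport u →
      eLpNorm u (ENNReal.ofReal (p * N / (N - p))) volume ≤
        ENNReal.ofReal C * eLpNorm (fun x => fderiv ℝ u x) (ENNReal.ofReal p) volume :=
  gagliardo_nirenberg_sobolev_general N p hp hpN
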